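/- For every n ≥ 0: x_n = (1/π1)·E[(X1(n) − π1)²] = E[(X+(n) − π1)²] + (π2/π1)·E[(X−(n) − π2)²], and consequently x_n ≥ z_n ≥ 0. -/

import Mathlib

open Finset Filter

namespace AsymIsing

/-- Level-`k` vertices of the rooted `d`-ary tree: paths of length `k` from the root. -/
abbrev Vert (d k : ℕ) : Type := Fin k → Fin d

/-- A spin configuration on levels `0, …, n` of the `d`-ary tree. -/
abbrev Conf (d n : ℕ) : Type := ∀ k : Fin (n + 1), Vert d k → Fin 2

/-- A spin configuration on level `n` only. -/
abbrev LConf (d n : ℕ) : Type := Vert d n → Fin 2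

/-- The transition matrix of the asymmetric binary channel; the paper's state `1`
corresponds to the index `0` and the state `2` to the index `1`. -/
noncomputable def Mmat (θ Δ : ℝ) : Fin 2 → Fin 2 → ℝ := fun i j =>
  if i = 0 then (if j = 0 then (1 + θ - Δ) / 2 else (1 - θ + Δ) / 2)
  else (if j = 0 then (1 - θ - Δ) / 2 else (1 + θ + Δ) / 2)

/-- The stationary distribution `π = (π₁, π₂)` of the channel. -/
noncomputable def pst (θ Δ : ℝ) : Fin 2 → ℝ := fun i =>
  if i = 0 then 1 / 2 - Δ / (2 * (1 - θ)) else 1 / 2 + Δ / (2 * (1 - θ))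

/-- The root spin of a configuration. -/
def root {d n : ℕ} (σ : Conf d n) : Fin 2 := σ ⟨0, n.succ_pos⟩ (fun i => i.elim0)

/-- The restriction of a configuration to the last (`n`-th) level. -/
def top {d n : ℕ} (σ : Conf d n) : LConf d n := σ (Fin.last n)

/-- The probability of a full configuration on levels `0, …, n` under the broadcast
process: the root is drawn from `π` and spins propagate along edges via `M`. -/
noncomputable def confProb (d : ℕ) (θ Δ : ℝ) (n : ℕ) (σ : Conf d n) : ℝ :=
  pst θ Δ (root σ) *
    ∏ k : Fin n, ∏ v : Vert d (k + 1),
      Mmat θ Δ (σ k.castSucc (v ∘ Fin.castSucc)) (σ k.succ v)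

/-- `P(σ(n) = A)`: the marginal law of the level-`n` spins. -/
noncomputable def levelProb (d : ℕ) (θ Δ : ℝ) (n : ℕ) (A : LConf d n) : ℝ :=
  ∑ σ : Conf d n, if top σ = A then confProb d θ Δ n σ else 0

/-- `P(σ_ρ = i, σ(n) = A)`. -/
noncomputable def jointProb (d : ℕ) (θ Δ : ℝ) (n : ℕ) (i : Fin 2) (A : LConf d n) : ℝ :=
  ∑ σ : Conf d n, if root σ = i ∧ top σ = A then confProb d θ Δ n σ else 0

/-- The posterior `f_n(i, A) = P(σ_ρ = i ∣ σ(n) = A)`. -/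
noncomputable def post (d : ℕ) (θ Δ : ℝ) (n : ℕ) (i : Fin 2) (A : LConf d n) : ℝ :=
  jointProb d θ Δ n i A / levelProb d θ Δ n A

/-- The law of `σ^i(n)`, i.e. `P(σ(n) = A ∣ σ_ρ = i)`. -/
noncomputable def condLevel (d : ℕ) (θ Δ : ℝ) (n : ℕ) (i : Fin 2) (A : LConf d n) : ℝ :=
  jointProb d θ Δ n i A / pst θ Δ i

/-- The total variation distance between `σ^1(n)` and `σ^2(n)`. -/
noncomputable def tvDist (d : ℕ) (θ Δ : ℝ) (n : ℕ) : ℝ :=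
  (1 / 2) * ∑ A : LConf d n, |condLevel d θ Δ n 0 A - condLevel d θ Δ n 1 A|

/-- The reconstruction problem is solvable if `limsup_n d_TV(σ^1(n), σ^2(n)) > 0`. -/
def solvable (d : ℕ) (θ Δ : ℝ) : Prop :=
  0 < Filter.limsup (fun n => tvDist d θ Δ n) Filter.atTop

/-- Non-reconstruction: `limsup_n d_TV(σ^1(n), σ^2(n)) = 0`. -/
def nonReconstruction (d : ℕ) (θ Δ : ℝ) : Prop :=
  Filter.limsup (fun n => tvDist d θ Δ n) Filter.atTop = 0

/-- Expectation of a function of the level-`n` configuration, conditioned on `σ_ρ = 1`. -/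
noncomputable def expect1 (d : ℕ) (θ Δ : ℝ) (n : ℕ) (g : LConf d n → ℝ) : ℝ :=
  ∑ A : LConf d n, condLevel d θ Δ n 0 A * g A

/-- `x_n = E f_n(1, σ^1(n)) − π₁`. -/
noncomputable def xseq (d : ℕ) (θ Δ : ℝ) (n : ℕ) : ℝ :=
  expect1 d θ Δ n (fun A => post d θ Δ n 0 A) - pst θ Δ 0

/-- `z_n = E (f_n(1, σ^1(n)) − π₁)²`. -/
noncomputable def zseq (d : ℕ) (θ Δ : ℝ) (n : ℕ) : ℝ :=
  expect1 d θ Δ n (fun A => (post d θ Δ n 0 A - pst θ Δ 0) ^ 2)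

/-- The restriction of a level-`(n+1)` configuration to the subtree of the `j`-th
child of the root (paths starting with `j`). -/
def restrictChild {d n : ℕ} (j : Fin d) (A : LConf d (n + 1)) : LConf d n :=
  fun w => A (Fin.cons j w)

/-- `Y_j = f_n(1, σ_j(n+1))`, as a function of the level-`(n+1)` configuration. -/
noncomputable def Yfun (d : ℕ) (θ Δ : ℝ) (n : ℕ) (j : Fin d) (A : LConf d (n + 1)) : ℝ :=
  post d θ Δ n 0 (restrictChild j A)

/-- `Z₁ = ∏_j (1 + (θ/π₁)(Y_j − π₁))`, as a function of the level-`(n+1)` configuration. -/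
noncomputable def Z1fun (d : ℕ) (θ Δ : ℝ) (n : ℕ) (A : LConf d (n + 1)) : ℝ :=
  ∏ j : Fin d, (1 + (θ / pst θ Δ 0) * (Yfun d θ Δ n j A - pst θ Δ 0))

/-- `Z₂ = ∏_j (1 − (θ/π₂)(Y_j − π₁))`, as a function of the level-`(n+1)` configuration. -/
noncomputable def Z2fun (d : ℕ) (θ Δ : ℝ) (n : ℕ) (A : LConf d (n + 1)) : ℝ :=
  ∏ j : Fin d, (1 - (θ / pst θ Δ 1) * (Yfun d θ Δ n j A - pst θ Δ 0))

/-- The value of `Δ` making `π = (π₁, π₂)` the stationary distribution of the channel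
with second eigenvalue `θ`, namely `Δ = (1 − θ)(π₂ − π₁)`. -/
noncomputable def Dlt (θ π1 π2 : ℝ) : ℝ := (1 - θ) * (π2 - π1)

/-- The Gaussian-approximation function
`f(s) = E[π₁ e^{sμ₁+√s W₁} / (π₁ e^{sμ₁+√s W₁} + π₂ e^{sμ₂+√s W₂})] − π₁`,
where `μ₁ = 1/(2π₁)`, `μ₂ = −(1+π₂)/(2π₂²)`, `W₁ ∼ N(0, 1/π₁)` (realized as `w/√π₁`
for `w` standard Gaussian) and `W₂ = −(π₁/π₂)·W₁`. -/
noncomputable def gfun (π1 π2 : ℝ) (s : ℝ) : ℝ :=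
  (∫ w : ℝ,
      (π1 * Real.exp (s * (1 / (2 * π1)) + Real.sqrt s * (w / Real.sqrt π1))) /
        (π1 * Real.exp (s * (1 / (2 * π1)) + Real.sqrt s * (w / Real.sqrt π1)) +
          π2 * Real.exp (s * (-(1 + π2) / (2 * π2 ^ 2)) +
            Real.sqrt s * (-(π1 / π2) * (w / Real.sqrt π1))))
    ∂(ProbabilityTheory.gaussianReal 0 1)) - π1


/-! Write `a_A = P(σ_ρ = 1, σ(n) = A)` and `b_A = P(σ_ρ = 2, σ(n) = A)`. Then
`P(σ(n) = A) = a_A + b_A`, `f_n(1, A) = a_A / (a_A + b_A)`, and, because the level-to-level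
transition kernels of the broadcast process are stochastic, `∑ a = π₁` and `∑ b = π₂`.
Expanding `∑ (a + b) (a / (a + b) − π₁)²` with these sums gives `π₁ x_n`. As
`f_n(2, A) − π₂ = −(f_n(1, A) − π₁)`, splitting the weight `a + b` into `a` and `b` gives the
second identity, and the inequalities only use that squares are nonnegative. -/

section Posterior

lemma add_mul_div_add_sub_sq {a b : ℝ} (ha : 0 ≤ a) (hb : 0 ≤ b) (p : ℝ) :
    (a + b) * (a / (a + b) - p) ^ 2 = a * (a / (a + b)) - 2 * p * a + p ^ 2 * (a + b) := by
  rcases (add_nonneg ha hb).eq_or_lt' with hab | hab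
  · obtain ⟨rfl, rfl⟩ : a = 0 ∧ b = 0 := ⟨by linarith, by linarith⟩
    simp
  · field_simp
    ring

lemma mul_div_add_sub_sq_add {a b p q : ℝ} (ha : 0 ≤ a) (hb : 0 ≤ b) (hpq : p + q = 1) :
    a * (a / (a + b) - p) ^ 2 + b * (b / (a + b) - q) ^ 2 =
      (a + b) * (a / (a + b) - p) ^ 2 := by
  rcases (add_nonneg ha hb).eq_or_lt' with hab | hab
  · obtain ⟨rfl, rfl⟩ : a = 0 ∧ b = 0 := ⟨by linarith, by linarith⟩
    simp
  · have hdev : b / (a + b) - q = -(a / (a + b) - p) := by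
      obtain rfl : q = 1 - p := by linarith
      field_simp
      ring
    rw [hdev]
    ring

variable {α : Type*} [Fintype α] {p q : ℝ} {a b : α → ℝ}

lemma sum_div_mul_posterior_sub_eq (ha : ∀ x, 0 ≤ a x) (hb : ∀ x, 0 ≤ b x) (hp : p ≠ 0)
    (hsa : ∑ x, a x = p) (hsb : ∑ x, b x = q) (hpq : p + q = 1) :
    ∑ x, a x / p * (a x / (a x + b x)) - p =
      1 / p * ∑ x, (a x + b x) * (a x / (a x + b x) - p) ^ 2 := by
  have hsab : ∑ x, (a x + b x) = 1 := by rw [sum_add_distrib, hsa, hsb, hpq]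
  simp only [add_mul_div_add_sub_sq (ha _) (hb _), sum_add_distrib, sum_sub_distrib,
    ← mul_sum, hsab, hsa, div_mul_eq_mul_div, ← sum_div]
  field_simp
  ring

lemma inv_mul_sum_sq_eq_add (ha : ∀ x, 0 ≤ a x) (hb : ∀ x, 0 ≤ b x) (hp : p ≠ 0) (hq : q ≠ 0)
    (hpq : p + q = 1) :
    1 / p * ∑ x, (a x + b x) * (a x / (a x + b x) - p) ^ 2 =
      ∑ x, a x / p * (a x / (a x + b x) - p) ^ 2 +
        q / p * ∑ x, b x / q * (b x / (a x + b x) - q) ^ 2 := by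
  simp only [← mul_div_add_sub_sq_add (ha _) (hb _) hpq, mul_sum, ← sum_add_distrib]
  refine sum_congr rfl fun x _ => ?_
  field_simp

end Posterior

lemma sum_mul_prod_kernel {β : ℕ → Type*} [∀ k, Fintype (β k)]
    (K : ∀ k, β k → β (k + 1) → ℝ) (hK : ∀ k x, ∑ y, K k x y = 1) (w : β 0 → ℝ) :
    ∀ n : ℕ, ∑ σ : (∀ k : Fin (n + 1), β k),
      w (σ ⟨0, n.succ_pos⟩) * ∏ k : Fin n, K k (σ k.castSucc) (σ k.succ) = ∑ x, w x
  | 0 => by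
    simpa using Fintype.sum_equiv (Equiv.piUnique fun k : Fin 1 => β k) _ w fun σ => rfl
  | n + 1 => by
    rw [← sum_mul_prod_kernel K hK w n,
      ← (Fin.snocEquiv fun k : Fin (n + 2) => β k).sum_comp, Fintype.sum_prod_type_right]
    refine sum_congr rfl fun τ _ => ?_
    have hsnoc (y : β (n + 1)) (k : Fin n) :
        Fin.snoc (α := fun k : Fin (n + 2) => β k) τ y k.castSucc.succ = τ k.succ :=
      Fin.snoc_castSucc (i := k.succ) ..
    simp [Fin.prod_univ_castSucc, hsnoc, ← mul_sum, hK]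

section Broadcast

variable {d : ℕ} {θ Δ : ℝ}

lemma sum_Mmat (θ Δ : ℝ) (i : Fin 2) : ∑ j, Mmat θ Δ i j = 1 := by
  fin_cases i <;>
    simp only [Mmat, Fin.zero_eta, Fin.mk_one, Fin.isValue, one_ne_zero, ↓reduceIte,
      Fin.sum_univ_two] <;> ring

lemma pst_zero_add_pst_one (θ Δ : ℝ) : pst θ Δ 0 + pst θ Δ 1 = 1 := by
  norm_num [pst]

lemma pst_pos (hM : ∀ i j, 0 < Mmat θ Δ i j) (i : Fin 2) : 0 < pst θ Δ i := by
  have h10 : 0 < 1 - θ - Δ := by simpa [Mmat] using hM 1 0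
  have h01 : 0 < 1 - θ + Δ := by simpa [Mmat] using hM 0 1
  have hθ : 0 < 2 * (1 - θ) := by linarith
  have hθ' : 1 - θ ≠ 0 := by linarith
  fin_cases i
  · calc 0 < (1 - θ - Δ) / (2 * (1 - θ)) := div_pos h10 hθ
      _ = pst θ Δ 0 := by rw [pst, if_pos rfl]; field_simp
  · calc 0 < (1 - θ + Δ) / (2 * (1 - θ)) := div_pos h01 hθ
      _ = pst θ Δ 1 := by rw [pst, if_neg one_ne_zero]; field_simp

noncomputable def levelKernel (d : ℕ) (θ Δ : ℝ) (k : ℕ) (a : LConf d k) (b : LConf d (k + 1)) :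
    ℝ :=
  ∏ v : Vert d (k + 1), Mmat θ Δ (a (v ∘ Fin.castSucc)) (b v)

lemma sum_levelKernel (d : ℕ) (θ Δ : ℝ) (k : ℕ) (a : LConf d k) :
    ∑ b, levelKernel d θ Δ k a b = 1 := by
  simp only [levelKernel, ← Fintype.prod_sum, sum_Mmat, prod_const_one]

lemma sum_confProb_of_root_eq (n : ℕ) (i : Fin 2) :
    ∑ σ : Conf d n, (if root σ = i then confProb d θ Δ n σ else 0) = pst θ Δ i := by
  have h := sum_mul_prod_kernel (levelKernel d θ Δ) (sum_levelKernel d θ Δ)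
    (fun a => if a (fun v => v.elim0) = i then pst θ Δ i else 0) n
  -- level `0` consists of the root alone, so `LConf d 0 ≃ Fin 2`
  have hroot : (fun v => v.elim0 : Vert d 0) = default := Subsingleton.elim _ _
  rw [Fintype.sum_equiv (Equiv.funUnique (Vert d 0) (Fin 2)) _
    (fun j => if j = i then pst θ Δ i else 0) fun a => by simp [hroot],
    sum_ite_eq', if_pos (mem_univ i)] at h
  rw [← h]
  refine sum_congr rfl fun σ _ => ?_
  change _ = (if root σ = i then pst θ Δ i else 0) * _
  split_ifs with hσ
  · rw [← hσ]
    rfl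
  · exact (zero_mul _).symm

lemma sum_jointProb (n : ℕ) (i : Fin 2) : ∑ A, jointProb d θ Δ n i A = pst θ Δ i := by
  unfold jointProb
  rw [← sum_confProb_of_root_eq n i, sum_comm]
  refine sum_congr rfl fun σ _ => ?_
  by_cases hσ : root σ = i <;> simp [hσ]

lemma levelProb_eq_add (n : ℕ) (A : LConf d n) :
    levelProb d θ Δ n A = jointProb d θ Δ n 0 A + jointProb d θ Δ n 1 A := by
  unfold levelProb jointProb
  rw [← sum_add_distrib]
  refine sum_congr rfl fun σ _ => ?_
  rw [← Fin.sum_univ_two (fun i => if root σ = i ∧ top σ = A then confProb d θ Δ n σ else 0)]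
  simp only [ite_and, sum_ite_eq, mem_univ, if_true]

lemma jointProb_nonneg (hM : ∀ i j, 0 < Mmat θ Δ i j) (n : ℕ) (i : Fin 2) (A : LConf d n) :
    0 ≤ jointProb d θ Δ n i A := by
  refine sum_nonneg fun σ _ => ?_
  split_ifs
  · exact mul_nonneg (pst_pos hM _).le (prod_nonneg fun _ _ => prod_nonneg fun _ _ => (hM _ _).le)
  · rfl

end Broadcast

theorem xseq_second_moment_identities_general (d : ℕ) (θ Δ : ℝ) (hM : ∀ i j, 0 < Mmat θ Δ i j) :
    ∀ n : ℕ,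
      xseq d θ Δ n =
        (1 / pst θ Δ 0) *
          ∑ A : LConf d n, levelProb d θ Δ n A * (post d θ Δ n 0 A - pst θ Δ 0) ^ 2 ∧
      xseq d θ Δ n =
        zseq d θ Δ n +
          (pst θ Δ 1 / pst θ Δ 0) *
            ∑ A : LConf d n, condLevel d θ Δ n 1 A * (post d θ Δ n 1 A - pst θ Δ 1) ^ 2 ∧
      zseq d θ Δ n ≤ xseq d θ Δ n ∧ 0 ≤ zseq d θ Δ n := by
  intro n
  have hπ1 := pst_pos hM 0
  have hπ2 := pst_pos hM 1
  have h0 := jointProb_nonneg (d := d) hM n 0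
  have h1 := jointProb_nonneg (d := d) hM n 1
  have hx := sum_div_mul_posterior_sub_eq h0 h1 hπ1.ne' (sum_jointProb n 0) (sum_jointProb n 1)
    (pst_zero_add_pst_one θ Δ)
  have hsplit := inv_mul_sum_sq_eq_add h0 h1 hπ1.ne' hπ2.ne' (pst_zero_add_pst_one θ Δ)
  have hz : 0 ≤ zseq d θ Δ n :=
    sum_nonneg fun A _ => mul_nonneg (div_nonneg (h0 A) hπ1.le) (sq_nonneg _)
  have hw : 0 ≤ ∑ A : LConf d n, condLevel d θ Δ n 1 A * (post d θ Δ n 1 A - pst θ Δ 1) ^ 2 :=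
    sum_nonneg fun A _ => mul_nonneg (div_nonneg (h1 A) hπ2.le) (sq_nonneg _)
  simp only [xseq, zseq, expect1, post, condLevel, levelProb_eq_add] at hz hw ⊢
  refine ⟨hx, hx.trans hsplit, ?_, hz⟩
  rw [hx, hsplit]
  exact le_add_of_nonneg_right (mul_nonneg (div_nonneg hπ2.le hπ1.le) hw)

/-- For every `n ≥ 0`,
`x_n = (1/π₁)·E[(X₁(n) − π₁)²] = E[(X⁺(n) − π₁)²] + (π₂/π₁)·E[(X⁻(n) − π₂)²]`,
and consequently `x_n ≥ z_n ≥ 0`. -/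
theorem xseq_second_moment_identities (d : ℕ) (hd : 2 ≤ d) (θ Δ : ℝ) (hθ0 : θ ≠ 0) (hθ1 : |θ| < 1)
    (hθΔ : |θ| + |Δ| ≤ 1) (hM : ∀ i j, 0 < Mmat θ Δ i j)
    (hord : pst θ Δ 1 ≤ pst θ Δ 0) :
    ∀ n : ℕ,
      xseq d θ Δ n =
        (1 / pst θ Δ 0) *
          ∑ A : LConf d n, levelProb d θ Δ n A * (post d θ Δ n 0 A - pst θ Δ 0) ^ 2 ∧
      xseq d θ Δ n =
        zseq d θ Δ n +
          (pst θ Δ 1 / pst θ Δ 0) *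
            ∑ A : LConf d n, condLevel d θ Δ n 1 A * (post d θ Δ n 1 A - pst θ Δ 1) ^ 2 ∧
      zseq d θ Δ n ≤ xseq d θ Δ n ∧ 0 ≤ zseq d θ Δ n :=
  xseq_second_moment_identities_general d θ Δ hM

end AsymIsing
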